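/- Let G be an infinite group generated by a finite symmetric set S, let (F_n) be a Følner exhaustion of G, and let (α_k) be a sequence of positive reals. Then there exist a sequence of natural numbers (s_k) with s_1 ≥ 1 and s_{k+1} ≥ 10·s_k for all k, and indices n_1 < n_2 < n_3 < ⋯ such that 1 ∈ F_{n_1} ⊆ B_{s_1} ⊆ F_{n_2} ⊆ B_{s_2} ⊆ F_{n_3} ⊆ ⋯ (i.e. F_{n_k} ⊆ B_{s_k} ⊆ F_{n_{k+1}} for all k) and for every i, |B_{100·s_i}(F_{n_{i+1}})| < (1 + α_i)·|F_{n_{i+1}}| (that is, F_{n_{i+1}} is of type (100·s_i, α_i)). -/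

import Mathlib

open Pointwise Filter Topology

section Defs

variable {G : Type*} [Group G]

/-- The word ball of radius `k` with respect to the generating set `S`. -/
noncomputable def wball (S : Finset G) (k : ℕ) : Finset G :=
  letI := Classical.decEq G
  (insert (1 : G) S) ^ k

/-- The `k`-neighborhood `B_k(F) = B_k * F` of a finite set `F`. -/
noncomputable def wnbhd (S : Finset G) (k : ℕ) (F : Finset G) : Finset G :=
  letI := Classical.decEq G
  wball S k * F

/-- The `k`-interior `Ω_k(F)` of a finite set `F`. -/
noncomputable def winter (S : Finset G) (k : ℕ) (F : Finset G) : Finset G :=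
  letI := Classical.decEq G
  F.filter fun p => wball S k * {p} ⊆ F

/-- The boundary `∂F` of a finite set `F`. -/
noncomputable def wbdry (S : Finset G) (F : Finset G) : Finset G :=
  letI := Classical.decEq G
  F.filter fun p => ∃ s ∈ S, s * p ∉ F

/-- `S` is a finite symmetric generating set. -/
def IsSymmGen (S : Finset G) : Prop :=
  (∀ s ∈ S, s⁻¹ ∈ S) ∧ Subgroup.closure (S : Set G) = ⊤

/-- A Følner exhaustion of `G`. -/
def IsFolnerExhaustion (S : Finset G) (F : ℕ → Finset G) : Prop :=
  (1 : G) ∈ F 0 ∧ Monotone F ∧ (∀ g : G, ∃ n, g ∈ F n) ∧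
    Filter.Tendsto (fun n => ((wbdry S (F n)).card : ℝ) / ((F n).card : ℝ))
      Filter.atTop (nhds 0)

variable {d : ℕ}

/-- The space of vectors supported in `Fs` such that `A.mulVec f` vanishes on `Fv`. -/
noncomputable def kerOn (A : Matrix (Fin d) (Fin d) (MonoidAlgebra ℂ G))
    (Fs Fv : Finset G) : Submodule ℂ (Fin d → MonoidAlgebra ℂ G) where
  carrier := {f | (∀ i, (f i).coeff.support ⊆ Fs) ∧ ∀ i, ∀ g ∈ Fv, (A.mulVec f i).coeff g = 0}
  zero_mem' := ⟨fun i => by simp, fun i g hg => by simp [Matrix.mulVec_zero]⟩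
  add_mem' := by
    classical
    rintro f g ⟨hf1, hf2⟩ ⟨hg1, hg2⟩
    constructor
    · intro i
      exact Finsupp.support_add.trans (Finset.union_subset (hf1 i) (hg1 i))
    · intro i x hx
      have h : A.mulVec (f + g) = A.mulVec f + A.mulVec g := Matrix.mulVec_add A f g
      rw [h]
      show (A.mulVec f i + A.mulVec g i).coeff x = 0
      rw [MonoidAlgebra.coeff_add, Finsupp.add_apply, hf2 i x hx, hg2 i x hx, add_zero]
  smul_mem' := by
    classical
    rintro c f ⟨hf1, hf2⟩
    constructor
    · intro i
      exact (Finsupp.support_smul).trans (hf1 i)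
    · intro i x hx
      have h : A.mulVec (c • f) = c • A.mulVec f := Matrix.mulVec_smul A c f
      rw [h]
      show (c • A.mulVec f i).coeff x = 0
      rw [MonoidAlgebra.coeff_smul, Finsupp.smul_apply, hf2 i x hx, smul_zero]

/-- The space of vectors supported in `Fs` with `A.mulVec f = 0`. -/
noncomputable def kerAll (A : Matrix (Fin d) (Fin d) (MonoidAlgebra ℂ G))
    (Fs : Finset G) : Submodule ℂ (Fin d → MonoidAlgebra ℂ G) where
  carrier := {f | (∀ i, (f i).coeff.support ⊆ Fs) ∧ A.mulVec f = 0}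
  zero_mem' := ⟨fun i => by simp, Matrix.mulVec_zero A⟩
  add_mem' := by
    classical
    rintro f g ⟨hf1, hf2⟩ ⟨hg1, hg2⟩
    exact ⟨fun i => Finsupp.support_add.trans (Finset.union_subset (hf1 i) (hg1 i)),
      by rw [Matrix.mulVec_add, hf2, hg2, add_zero]⟩
  smul_mem' := by
    classical
    rintro c f ⟨hf1, hf2⟩
    exact ⟨fun i => (Finsupp.support_smul).trans (hf1 i),
      by rw [Matrix.mulVec_smul, hf2, smul_zero]⟩

/-- `V(F)`. -/
noncomputable def VSpace (A : Matrix (Fin d) (Fin d) (MonoidAlgebra ℂ G)) (F : Finset G) :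
    Submodule ℂ (Fin d → MonoidAlgebra ℂ G) :=
  kerOn A F F

/-- `Z(F)`. -/
noncomputable def ZSpace (S : Finset G) (w : ℕ) (A : Matrix (Fin d) (Fin d) (MonoidAlgebra ℂ G))
    (F : Finset G) : Submodule ℂ (Fin d → MonoidAlgebra ℂ G) :=
  kerOn A (wnbhd S w F) F

/-- `W(F)`. -/
noncomputable def WSpace (S : Finset G) (w : ℕ) (A : Matrix (Fin d) (Fin d) (MonoidAlgebra ℂ G))
    (F : Finset G) : Submodule ℂ (Fin d → MonoidAlgebra ℂ G) :=
  kerAll A (winter S w F)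

/-- `A.mulVec` as a `ℂ`-linear map. -/
noncomputable def mulVecL {R : Type*} [Ring R] [Algebra ℂ R] {d : ℕ}
    (A : Matrix (Fin d) (Fin d) R) : (Fin d → R) →ₗ[ℂ] (Fin d → R) where
  toFun := A.mulVec
  map_add' := Matrix.mulVec_add A
  map_smul' c v := Matrix.mulVec_smul A c v

/-- Coordinatewise restriction to `F` (multiplication by the indicator of `F`). -/
noncomputable def restrictTo (d : ℕ) (F : Finset G) :
    (Fin d → MonoidAlgebra ℂ G) →ₗ[ℂ] (Fin d → MonoidAlgebra ℂ G) :=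
  letI := Classical.decEq G
  { toFun := fun f i => MonoidAlgebra.ofCoeff ((f i).coeff.filter (· ∈ F))
    map_add' := fun f g => by
      funext i
      exact congrArg MonoidAlgebra.ofCoeff Finsupp.filter_add
    map_smul' := fun c f => by
      funext i
      exact congrArg MonoidAlgebra.ofCoeff Finsupp.filter_smul }

end Defs

section Tiling

variable {ι α : Type*}

/-- An `ε`-disjoint family of finite sets. -/
def EpsDisjoint (I : Finset ι) (A : ι → Finset α) (ε : ℝ) : Prop :=
  ∃ Ab : ι → Finset α, (∀ i ∈ I, Ab i ⊆ A i) ∧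
    (∀ i ∈ I, ((1 - ε) * (A i).card : ℝ) ≤ ((Ab i).card : ℝ)) ∧
    ∀ i ∈ I, ∀ j ∈ I, i ≠ j → Disjoint (Ab i) (Ab j)

/-- The family `(A i)_{i ∈ I}` `a`-covers `X`. -/
def CoversFrac (I : Finset ι) (A : ι → Finset α) (X : Finset α) (a : ℝ) : Prop :=
  letI := Classical.decEq α
  (a * X.card : ℝ) ≤ ((X ∩ I.biUnion A).card : ℝ)

/-- The family `(A i)_{i ∈ I}` `δ`-evenly covers `X`. -/
def EvenCovering (I : Finset ι) (A : ι → Finset α) (X : Finset α) (δ : ℝ) : Prop :=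
  letI := Classical.decEq α
  ∃ M : ℕ, 1 ≤ M ∧ (∀ p ∈ X, (I.filter fun i => p ∈ A i).card ≤ M) ∧
    ((1 - δ) * M * X.card : ℝ) ≤ ∑ i ∈ I, ((A i).card : ℝ)

/-- The right translate `H·x`. -/
noncomputable def rtrans [Mul α] (H : Finset α) (x : α) : Finset α :=
  letI := Classical.decEq α
  H.image (· * x)

end Tiling

section Supp

variable {G : Type*} [Group G]

/-- Vectors all of whose coordinates are supported in `F`. -/
noncomputable def suppIn (d : ℕ) (F : Finset G) :
    Submodule ℂ (Fin d → MonoidAlgebra ℂ G) where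
  carrier := {f | ∀ i, (f i).coeff.support ⊆ F}
  zero_mem' := fun i => by simp
  add_mem' := by
    classical
    intro f g hf hg i
    exact Finsupp.support_add.trans (Finset.union_subset (hf i) (hg i))
  smul_mem' := fun c f hf i => (Finsupp.support_smul).trans (hf i)

end Supp

/-!
Since `S` generates `G`, every finite set lies in some ball `B_r`, and since `(F n)` exhausts `G`,
every ball lies in all late enough `F n`. Every point of `B_K(F)` outside `F` is `b p` with
`b ∈ B_K` and `p ∈ ∂F` (cut a word at the last point where it is still in `F`), so
`|B_K(F)| ≤ |F| + |B_K| |∂F|` and the Følner condition makes all late enough `F n` of type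
`(K, α)`. The sequences are then chosen alternately: a ball containing the current `F`, then a
later `F` containing that ball and of the required type.
-/

def IsOfType {G : Type*} [Group G] (S : Finset G) (K : ℕ) (α : ℝ) (H : Finset G) : Prop :=
  ((wnbhd S K H).card : ℝ) < (1 + α) * (H.card : ℝ)

theorem Monotone.eventually_subset_of_forall_exists_mem {ι α : Type*} [Preorder ι]
    {A : ι → Finset α} (hA : Monotone A) (hcover : ∀ a, ∃ i, a ∈ A i) (T : Finset α) :
    ∀ᶠ i in atTop, T ⊆ A i :=
  (eventually_all_finset T).2 fun a _ =>
    let ⟨i, hi⟩ := hcover a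
    (eventually_ge_atTop i).mono fun _ hj => hA hj hi

section WordBall

variable {G : Type*} [Group G] (S : Finset G)

theorem one_mem_wball (k : ℕ) : (1 : G) ∈ wball S k :=
  letI := Classical.decEq G
  Finset.one_mem_pow (Finset.mem_insert_self 1 S)

theorem wball_mono : Monotone (wball S) := fun _ _ h =>
  letI := Classical.decEq G
  Finset.pow_subset_pow_right (Finset.mem_insert_self 1 S) h

theorem wball_zero : wball S 0 = {1} := rfl

theorem mem_wball_succ {k : ℕ} {g : G} :
    g ∈ wball S (k + 1) ↔ ∃ t, (t = 1 ∨ t ∈ S) ∧ ∃ c ∈ wball S k, t * c = g := by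
  let _ := Classical.decEq G
  rw [wball, wball, pow_succ']
  simp only [Finset.mem_mul, Finset.mem_insert]

theorem mem_wball_of_mem {k : ℕ} {t : G} (hk : 1 ≤ k) (ht : t ∈ S) : t ∈ wball S k :=
  wball_mono S hk <| (mem_wball_succ S).2 ⟨t, Or.inr ht, 1, one_mem_wball S 0, mul_one t⟩

theorem mul_mem_wball {a b : ℕ} {x y : G} (hx : x ∈ wball S a) (hy : y ∈ wball S b) :
    x * y ∈ wball S (a + b) := by
  classical
  rw [wball, pow_add]
  exact Finset.mul_mem_mul hx hy

theorem inv_mem_wball (hsymm : ∀ s ∈ S, s⁻¹ ∈ S) {k : ℕ} {g : G} (hg : g ∈ wball S k) :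
    g⁻¹ ∈ wball S k := by
  classical
  have hS : S⁻¹ = S :=
    Finset.Subset.antisymm (fun s hs => inv_inv s ▸ hsymm _ (Finset.mem_inv'.1 hs))
      fun s hs => Finset.mem_inv'.2 (hsymm s hs)
  have hT : (insert (1 : G) S)⁻¹ = insert 1 S := by rw [Finset.inv_insert, inv_one, hS]
  have : g⁻¹ ∈ ((insert (1 : G) S) ^ k)⁻¹ := Finset.inv_mem_inv hg
  rwa [← inv_pow, hT] at this

theorem exists_mem_wball (hS : IsSymmGen S) (g : G) : ∃ k, g ∈ wball S k := by
  induction (hS.2 ▸ Subgroup.mem_top g : g ∈ Subgroup.closure (S : Set G))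
    using Subgroup.closure_induction with
  | mem t ht => exact ⟨1, mem_wball_of_mem S le_rfl ht⟩
  | one => exact ⟨0, one_mem_wball S 0⟩
  | mul x y _ _ hx hy =>
    obtain ⟨a, ha⟩ := hx
    obtain ⟨b, hb⟩ := hy
    exact ⟨a + b, mul_mem_wball S ha hb⟩
  | inv x _ hx =>
    obtain ⟨a, ha⟩ := hx
    exact ⟨a, inv_mem_wball S hS.1 ha⟩

theorem eventually_subset_wball (hS : IsSymmGen S) (T : Finset G) :
    ∀ᶠ k in atTop, T ⊆ wball S k :=
  (wball_mono S).eventually_subset_of_forall_exists_mem (exists_mem_wball S hS) T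

theorem mem_wnbhd {k : ℕ} {F : Finset G} {g : G} :
    g ∈ wnbhd S k F ↔ ∃ b ∈ wball S k, ∃ p ∈ F, b * p = g := by
  simp only [wnbhd, Finset.mem_mul]

theorem mem_wbdry {F : Finset G} {p : G} : p ∈ wbdry S F ↔ p ∈ F ∧ ∃ s ∈ S, s * p ∉ F := by
  simp only [wbdry, Finset.mem_filter]

theorem mem_or_exists_mem_wbdry_of_mem_wnbhd {k : ℕ} {F : Finset G} {g : G}
    (hg : g ∈ wnbhd S k F) : g ∈ F ∨ ∃ b ∈ wball S k, ∃ p ∈ wbdry S F, b * p = g := by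
  induction k generalizing g with
  | zero =>
    obtain ⟨b, hb, p, hp, rfl⟩ := (mem_wnbhd S).1 hg
    rw [wball_zero, Finset.mem_singleton] at hb
    exact Or.inl (by rwa [hb, one_mul])
  | succ k ih =>
    obtain ⟨b, hb, p, hp, rfl⟩ := (mem_wnbhd S).1 hg
    obtain ⟨t, ht, c, hc, rfl⟩ := (mem_wball_succ S).1 hb
    rw [mul_assoc]
    rcases ih ((mem_wnbhd S).2 ⟨c, hc, p, hp, rfl⟩) with hcp | ⟨b', hb', q, hq, hcp⟩
    · by_cases htcp : t * (c * p) ∈ F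
      · exact Or.inl htcp
      · have htS : t ∈ S := ht.resolve_left fun h => htcp (by rwa [h, one_mul])
        refine Or.inr ⟨t, mem_wball_of_mem S k.succ_pos htS, c * p, ?_, rfl⟩
        exact (mem_wbdry S).2 ⟨hcp, t, htS, htcp⟩
    · refine Or.inr ⟨t * b', (mem_wball_succ S).2 ⟨t, ht, b', hb', rfl⟩, q, hq, ?_⟩
      rw [mul_assoc, hcp]

theorem card_wnbhd_le (k : ℕ) (F : Finset G) :
    (wnbhd S k F).card ≤ F.card + (wball S k).card * (wbdry S F).card := by
  classical
  calc (wnbhd S k F).card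
      ≤ (F ∪ wball S k * wbdry S F).card := by
        refine Finset.card_le_card fun g hg => ?_
        rcases mem_or_exists_mem_wbdry_of_mem_wnbhd S hg with hgF | ⟨b, hb, p, hp, rfl⟩
        · exact Finset.mem_union_left _ hgF
        · exact Finset.mem_union_right _ (Finset.mul_mem_mul hb hp)
    _ ≤ F.card + (wball S k * wbdry S F).card := Finset.card_union_le _ _
    _ ≤ F.card + (wball S k).card * (wbdry S F).card := by gcongr; exact Finset.card_mul_le

end WordBall

namespace IsFolnerExhaustion

variable {G : Type*} [Group G] {S : Finset G} {F : ℕ → Finset G}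

theorem card_pos (hF : IsFolnerExhaustion S F) (n : ℕ) : 0 < (F n).card :=
  Finset.card_pos.2 ⟨1, hF.2.1 n.zero_le hF.1⟩

theorem eventually_subset (hF : IsFolnerExhaustion S F) (T : Finset G) :
    ∀ᶠ n in atTop, T ⊆ F n :=
  hF.2.1.eventually_subset_of_forall_exists_mem hF.2.2.1 T

theorem eventually_isOfType (hF : IsFolnerExhaustion S F) (k : ℕ) {a : ℝ} (ha : 0 < a) :
    ∀ᶠ n in atTop, IsOfType S k a (F n) := by
  have hB : (0 : ℝ) < (wball S k).card := by
    exact_mod_cast Finset.card_pos.2 ⟨1, one_mem_wball S k⟩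
  filter_upwards [hF.2.2.2.eventually (gt_mem_nhds (div_pos ha hB))] with n hn
  have hFn : (0 : ℝ) < (F n).card := by exact_mod_cast hF.card_pos n
  have hbdry := (div_lt_div_iff₀ hFn hB).1 hn
  calc ((wnbhd S k (F n)).card : ℝ)
      ≤ (F n).card + (wball S k).card * (wbdry S (F n)).card := by
        exact_mod_cast card_wnbhd_le S k (F n)
    _ < (1 + a) * (F n).card := by linarith

theorem exists_next (hS : IsSymmGen S) (hF : IsFolnerExhaustion S F) {a : ℝ} (ha : 0 < a)
    (r m : ℕ) : ∃ r' m', m < m' ∧ wball S r ⊆ F m' ∧ IsOfType S (100 * r) a (F m') ∧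
      10 * r ≤ r' ∧ F m' ⊆ wball S r' := by
  obtain ⟨m', hm', hball, htype⟩ := ((eventually_gt_atTop m).and
    ((hF.eventually_subset (wball S r)).and (hF.eventually_isOfType (100 * r) ha))).exists
  obtain ⟨r', hr', hFm'⟩ :=
    ((eventually_ge_atTop (10 * r)).and (eventually_subset_wball S hS (F m'))).exists
  exact ⟨r', m', hm', hball, htype, hr', hFm'⟩

end IsFolnerExhaustion

theorem good_subsequence_exists_general {G : Type*} [Group G] (S : Finset G)
    (hS : IsSymmGen S) (F : ℕ → Finset G) (hF : IsFolnerExhaustion S F)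
    (α : ℕ → ℝ) (hα : ∀ k, 0 < α k) :
    ∃ (s : ℕ → ℕ) (n : ℕ → ℕ), 1 ≤ s 0 ∧ (∀ k, 10 * s k ≤ s (k + 1)) ∧ StrictMono n ∧
      (1 : G) ∈ F (n 0) ∧ (∀ k, F (n k) ⊆ wball S (s k) ∧ wball S (s k) ⊆ F (n (k + 1))) ∧
      ∀ i, ((wnbhd S (100 * s i) (F (n (i + 1)))).card : ℝ)
        < (1 + α i) * ((F (n (i + 1))).card : ℝ) := by
  choose r' m' hm' hball htype hr' hFm' using fun i => hF.exists_next hS (hα i)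
  obtain ⟨r₀, hr₀, hF₀⟩ := ((eventually_ge_atTop 1).and (eventually_subset_wball S hS (F 0))).exists
  let f : ℕ → ℕ × ℕ := fun k => Nat.rec (r₀, 0) (fun i p => (r' i p.1 p.2, m' i p.1 p.2)) k
  refine ⟨fun k => (f k).1, fun k => (f k).2, hr₀, fun k => hr' k _ _,
    strictMono_nat_of_lt_succ fun k => hm' k _ _, hF.1, fun k => ⟨?_, hball k _ _⟩,
    fun i => htype i _ _⟩
  cases k with
  | zero => exact hF₀
  | succ k => exact hFm' k _ _

theorem good_subsequence_exists {G : Type*} [Group G] [Infinite G] (S : Finset G)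
    (hS : IsSymmGen S) (F : ℕ → Finset G) (hF : IsFolnerExhaustion S F)
    (α : ℕ → ℝ) (hα : ∀ k, 0 < α k) :
    ∃ (s : ℕ → ℕ) (n : ℕ → ℕ), 1 ≤ s 0 ∧ (∀ k, 10 * s k ≤ s (k + 1)) ∧ StrictMono n ∧
      (1 : G) ∈ F (n 0) ∧ (∀ k, F (n k) ⊆ wball S (s k) ∧ wball S (s k) ⊆ F (n (k + 1))) ∧
      ∀ i, ((wnbhd S (100 * s i) (F (n (i + 1)))).card : ℝ)
        < (1 + α i) * ((F (n (i + 1))).card : ℝ) :=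
  good_subsequence_exists_general S hS F hF α hα
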